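/- Define ξ_k : ℕ → ordinals by ξ_k(0)=0 and, for m in k-normal form A_a(k,b)+l: ξ_k(m) = b+1 if a=0; ξ_k(m) = ω·(1+b)+l if a=1; ξ_k(m) = ω²·(-1+ξ_k(a)) + ω·b + l if a ≥ 2. Then ξ_k(m) < ω^ω for all m, and for all m > 0, ξ_k(m-1) < ξ_k(m). -/

import Mathlib

/-- The parametrized Ackermann function: `A a k b` is `A_a(k,b)`. -/
def A : ℕ → ℕ → ℕ → ℕ
  | 0, _, b => b + 1
  | a+1, k, 0 => (fun x => A a k x)^[k] 0
  | a+1, k, b+1 => (fun x => A a k x)^[k] (A (a+1) k b)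
  termination_by a _ b => (a, b)

/-- `m = A_a(k,b) + l` is the `k`-normal form of `m`: `a` is maximal with
`A_a(k,0) ≤ m` and `b` is maximal with `A_a(k,b) ≤ m`. -/
def IsNF (k m a b l : ℕ) : Prop :=
  m = A a k b + l ∧ A a k 0 ≤ m ∧
  (∀ a', A a' k 0 ≤ m → a' ≤ a) ∧
  (∀ b', A a k b' ≤ m → b' ≤ b)

/-- The graph of the hereditary base change operation `m ↦ m[k←k+1]`. -/
inductive BC (k : ℕ) : ℕ → ℕ → Prop
  | zero : BC k 0 0
  | step {a b l a' b'} :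
      IsNF k (A a k b + l) a b l → BC k a a' → BC k b b' →
      BC k (A a k b + l) (A a' (k+1) b' + l)

open Ordinal in
/-- `-c + o`: truncated subtraction on finite ordinals, identity on infinite ones. -/
noncomputable def msub (c : ℕ) (o : Ordinal) : Ordinal :=
  if o < Ordinal.omega0 then o - c else o

open Ordinal in
/-- The graph of the map `ξ_k` assigning ordinals to natural numbers, defined
via `k`-normal forms: `ξ_k(m) = b+1` if `a = 0`, `ω·(1+b)+l` if `a = 1`, and
`ω²·(-1+ξ_k(a)) + ω·b + l` if `a ≥ 2`. -/
inductive Xi (k : ℕ) : ℕ → Ordinal → Prop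
  | zero : Xi k 0 0
  | base {b l : ℕ} : IsNF k (A 0 k b + l) 0 b l →
      Xi k (A 0 k b + l) ((b : Ordinal) + 1)
  | one {b l : ℕ} : IsNF k (A 1 k b + l) 1 b l →
      Xi k (A 1 k b + l) (omega0 * (1 + (b : Ordinal)) + (l : Ordinal))
  | ge {a b l : ℕ} {oa : Ordinal} : 2 ≤ a → IsNF k (A a k b + l) a b l →
      Xi k a oa →
      Xi k (A a k b + l) (omega0 ^ (2 : Ordinal) * msub 1 oa +
        omega0 * (b : Ordinal) + (l : Ordinal))


/-!
The argument rests on how the `k`-normal form changes from `m - 1` to `m` (for `k ≥ 2`): either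
the level `a` stays and `(b, l)` increases lexicographically, or `m = A_a(k,0)` and the level of
`m - 1` is `a - 1`. In the first case `ξ_k` increases since `ω·b + l` orders `(b, l)`
lexicographically; in the second the `ω²`-coefficient `-1 + ξ_k(a)` increases, by induction along
the derivation of `ξ_k(a)`, and all lower terms are `< ω²`. The invariant `m ≤ ξ_k(m)` gives
`ξ_k(a) ≥ 2` for `a ≥ 2`, where `-1 + ·` is positive and strictly monotone. Finally `ω^ω` bounds
every value because it is closed under `+` and `·`.
-/

theorem Function.lt_iterate_of_lt_map {α : Type*} [Preorder α] {f : α → α}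
    (hf : ∀ x, x < f x) {n : ℕ} (hn : 0 < n) (x : α) : x < f^[n] x := by
  obtain ⟨n, rfl⟩ := Nat.exists_eq_add_of_lt hn
  rw [zero_add, Function.iterate_succ_apply]
  exact (hf x).trans_le (Function.id_le_iterate_of_id_le (fun y => (hf y).le) n (f x))

section Ackermann

variable {k : ℕ}

theorem A_zero (k b : ℕ) : A 0 k b = b + 1 := by rw [A]

theorem A_succ_zero (a k : ℕ) : A (a + 1) k 0 = (A a k)^[k] 0 := by rw [A]

theorem A_succ_succ (a k b : ℕ) : A (a + 1) k (b + 1) = (A a k)^[k] (A (a + 1) k b) := by rw [A]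

theorem lt_A_right (hk : 1 ≤ k) (a b : ℕ) : b < A a k b := by
  induction a generalizing b with
  | zero => rw [A_zero]; omega
  | succ a iha =>
    induction b with
    | zero => rw [A_succ_zero]; exact Function.lt_iterate_of_lt_map iha hk 0
    | succ b ihb =>
      rw [A_succ_succ]
      exact Nat.lt_of_le_of_lt ihb (Function.lt_iterate_of_lt_map iha hk _)

theorem A_pos (hk : 1 ≤ k) (a b : ℕ) : 0 < A a k b :=
  (Nat.zero_le b).trans_lt (lt_A_right hk a b)

theorem A_strictMono_right (hk : 1 ≤ k) (a : ℕ) : StrictMono (A a k) := by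
  refine strictMono_nat_of_lt_succ fun b => ?_
  cases a with
  | zero => simp only [A_zero]; omega
  | succ a => rw [A_succ_succ]; exact Function.lt_iterate_of_lt_map (lt_A_right hk a) hk _

theorem A_strictMono_left_zero (hk : 2 ≤ k) : StrictMono (fun a => A a k 0) := by
  refine strictMono_nat_of_lt_succ fun a => ?_
  obtain ⟨j, rfl⟩ := Nat.exists_eq_add_of_le' hk
  rw [A_succ_zero, Function.iterate_succ_apply']
  exact A_strictMono_right (by omega) a
    (Function.lt_iterate_of_lt_map (lt_A_right (by omega) a) (by omega) 0)

end Ackermann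

namespace IsNF

variable {k m a b l a' b' l' : ℕ}

theorem unique (h : IsNF k m a b l) (h' : IsNF k m a' b' l') : a = a' ∧ b = b' ∧ l = l' := by
  obtain ⟨hm, h0, hamax, hbmax⟩ := h
  obtain ⟨hm', h0', hamax', hbmax'⟩ := h'
  obtain rfl : a = a' := le_antisymm (hamax' a h0) (hamax a' h0')
  obtain rfl : b = b' := le_antisymm (hbmax' b (by omega)) (hbmax b' (by omega))
  exact ⟨rfl, rfl, by omega⟩

theorem pos (hk : 1 ≤ k) (h : IsNF k m a b l) : 0 < m :=
  h.1 ▸ (A_pos hk a b).trans_le le_self_add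

theorem l_eq_zero_of_zero (h : IsNF k m 0 b l) : l = 0 := by
  have := h.2.2.2 (b + l) (by rw [A_zero, h.1, A_zero]; omega)
  omega

theorem pred_cases (hk : 2 ≤ k) (h : IsNF k m a b l) (h' : IsNF k (m - 1) a' b' l') :
    a' = a ∧ (b' < b ∨ b' = b ∧ l' < l) ∨ b = 0 ∧ l = 0 ∧ a' + 1 = a := by
  have hpos := h'.pos (by omega)
  obtain ⟨hm, h0, hamax, hbmax⟩ := h
  obtain ⟨hm', h0', hamax', -⟩ := h'
  have ha' : a' ≤ a := hamax a' (h0'.trans (Nat.sub_le m 1))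
  by_cases hA : A a k 0 ≤ m - 1
  · obtain rfl : a' = a := le_antisymm ha' (hamax' a hA)
    have hb : b' ≤ b := hbmax b' (by omega)
    rcases hb.lt_or_eq with hb | rfl
    · exact Or.inl ⟨rfl, Or.inl hb⟩
    · exact Or.inl ⟨rfl, Or.inr ⟨rfl, by omega⟩⟩
  · have hmA : m = A a k 0 := by omega
    have hb : b = 0 := by
      have : A a k b ≤ A a k 0 := by omega
      simpa using (A_strictMono_right (by omega) a).le_iff_le.1 this
    subst hb
    have ha : a' ≠ a := by rintro rfl; omega
    have hpred : a - 1 ≤ a' := hamax' (a - 1) <| by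
      have : A (a - 1) k 0 < A a k 0 := A_strictMono_left_zero hk (show a - 1 < a by omega)
      omega
    exact Or.inr ⟨rfl, by omega, by omega⟩

end IsNF

namespace Ordinal

/-- Ordinal subtraction solves `1 + x = o`, which is exactly the paper's `-1 + o`. -/
theorem msub_one (o : Ordinal) : msub 1 o = o - 1 := by
  unfold msub
  split_ifs with h
  · rw [Nat.cast_one]
  · rw [← one_add_of_omega0_le (not_lt.1 h), add_sub_cancel, one_add_of_omega0_le (not_lt.1 h)]

theorem one_le_sub_one {o : Ordinal} (h : 2 ≤ o) : 1 ≤ o - 1 :=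
  le_sub_of_add_le (by rwa [one_add_one_eq_two])

theorem sub_one_lt_sub_one {o₁ o₂ : Ordinal} (h₁ : 1 ≤ o₁) (h : o₁ < o₂) : o₁ - 1 < o₂ - 1 :=
  lt_sub.2 (by rwa [Ordinal.add_sub_cancel_of_le h₁])

theorem mul_add_lt_mul {c x y r : Ordinal} (hr : r < c) (hxy : x < y) : c * x + r < c * y :=
  calc c * x + r < c * x + c := add_lt_add_right hr _
    _ = c * (x + 1) := by rw [mul_add, mul_one]
    _ ≤ c * y := mul_le_mul_right (Order.add_one_le_of_lt hxy) _

theorem omega0_mul_add_lt_of_lex {b b' l l' : ℕ} (h : b' < b ∨ b' = b ∧ l' < l) :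
    ω * (b' : Ordinal) + l' < ω * b + l := by
  rcases h with h | ⟨rfl, h⟩
  · exact (mul_add_lt_mul (natCast_lt_omega0 l') (by exact_mod_cast h)).trans_le le_self_add
  · exact add_lt_add_right (by exact_mod_cast h) _

theorem omega0_mul_add_lt_omega0_sq {x r : Ordinal} (hx : x < ω) (hr : r < ω) :
    ω * x + r < ω ^ (2 : Ordinal) := by
  rw [show (2 : Ordinal) = 1 + 1 by norm_num, opow_add, opow_one]
  exact mul_add_lt_mul hr hx

end Ordinal

open Ordinal

namespace Xi

variable {k m a b l : ℕ} {o o' : Ordinal}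

theorem exists_isNF (h : Xi k m o) (hm : 0 < m) : ∃ a b l, IsNF k m a b l := by
  cases h with
  | zero => omega
  | base hnf | one hnf | ge _ hnf _ => exact ⟨_, _, _, hnf⟩

theorem eq_zero (hk : 1 ≤ k) (h : Xi k 0 o) : o = 0 := by
  generalize hm : 0 = m at h
  cases h with
  | zero => rfl
  | base hnf | one hnf | ge _ hnf _ => exact absurd (hnf.pos hk) (by omega)

theorem eq_of_isNF_zero (hk : 1 ≤ k) (h : Xi k m o) (hnf : IsNF k m 0 b l) : o = b + 1 := by
  cases h with
  | zero => exact absurd (hnf.pos hk) (by omega)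
  | base hnf' => obtain ⟨-, rfl, -⟩ := hnf'.unique hnf; rfl
  | one hnf' | ge _ hnf' _ => have := (hnf'.unique hnf).1; omega

theorem eq_of_isNF_one (hk : 1 ≤ k) (h : Xi k m o) (hnf : IsNF k m 1 b l) :
    o = ω * (1 + b) + l := by
  cases h with
  | zero => exact absurd (hnf.pos hk) (by omega)
  | one hnf' => obtain ⟨-, rfl, rfl⟩ := hnf'.unique hnf; rfl
  | base hnf' | ge _ hnf' _ => have := (hnf'.unique hnf).1; omega

theorem exists_of_isNF (hk : 1 ≤ k) (h : Xi k m o) (ha : 2 ≤ a) (hnf : IsNF k m a b l) :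
    ∃ oa, Xi k a oa ∧ o = ω ^ (2 : Ordinal) * (oa - 1) + ω * b + l := by
  cases h with
  | zero => exact absurd (hnf.pos hk) (by omega)
  | ge _ hnf' hxa => obtain ⟨rfl, rfl, rfl⟩ := hnf'.unique hnf; exact ⟨_, hxa, by rw [msub_one]⟩
  | base hnf' | one hnf' => have := (hnf'.unique hnf).1; omega

theorem unique (hk : 1 ≤ k) (h : Xi k m o) (h' : Xi k m o') : o = o' := by
  induction h generalizing o' with
  | zero => exact (h'.eq_zero hk).symm
  | base hnf => exact (h'.eq_of_isNF_zero hk hnf).symm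
  | one hnf => exact (h'.eq_of_isNF_one hk hnf).symm
  | ge ha hnf _ ih =>
    obtain ⟨oa', hxa', rfl⟩ := h'.exists_of_isNF hk ha hnf
    rw [ih hxa', msub_one]

theorem natCast_le (h : Xi k m o) : (m : Ordinal) ≤ o := by
  induction h with
  | zero => simp
  | base hnf => rw [hnf.l_eq_zero_of_zero, A_zero]; simp
  | one =>
    exact (natCast_lt_omega0 _).le.trans
      ((le_mul_of_one_le_right' le_self_add).trans le_self_add)
  | ge ha _ _ ih =>
    refine (natCast_lt_omega0 _).le.trans ?_
    calc ω ≤ ω ^ (2 : Ordinal) := left_le_opow _ two_pos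
      _ ≤ ω ^ (2 : Ordinal) * msub 1 _ :=
        le_mul_of_one_le_right' (msub_one _ ▸ one_le_sub_one ((Nat.cast_le.2 ha).trans ih))
      _ ≤ _ := le_self_add.trans le_self_add

theorem lt_omega0_opow_omega0 (h : Xi k m o) : o < ω ^ ω := by
  have add : IsPrincipal (· + ·) (ω ^ ω) := isPrincipal_add_omega0_opow ω
  have mul : IsPrincipal (· * ·) (ω ^ ω) := by simpa using isPrincipal_mul_omega0_opow_opow 1
  have nat (n : ℕ) : (n : Ordinal) < ω ^ ω :=
    (natCast_lt_omega0 n).trans_le (left_le_opow _ omega0_pos)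
  have omega_lt : ω < ω ^ ω := by simpa using (opow_lt_opow_iff_right one_lt_omega0).2 one_lt_omega0
  have omega_sq_lt : ω ^ (2 : Ordinal) < ω ^ ω :=
    (opow_lt_opow_iff_right one_lt_omega0).2 (by exact_mod_cast natCast_lt_omega0 2)
  induction h with
  | zero => exact_mod_cast nat 0
  | base => exact_mod_cast nat _
  | one => exact add (mul omega_lt (add (by exact_mod_cast nat 1) (nat _))) (nat _)
  | ge _ _ _ ih =>
    rw [msub_one]
    exact add (add (mul omega_sq_lt ((sub_le_self _ _).trans_lt ih)) (mul omega_lt (nat _))) (nat _)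

theorem lt_of_isNF_pred (hk : 2 ≤ k) (h : Xi k m o) {a' b' l' : ℕ}
    (hnf' : IsNF k (m - 1) a' b' l') (h' : Xi k (m - 1) o') : o' < o := by
  have hk1 : 1 ≤ k := by omega
  induction h generalizing a' b' l' o' with
  | zero => exact absurd (hnf'.pos hk1) (by omega)
  | base hnf =>
    obtain ⟨rfl, hlex⟩ | ⟨-, -, h⟩ := hnf.pred_cases hk hnf'
    · have := hnf.l_eq_zero_of_zero
      rw [h'.eq_of_isNF_zero hk1 hnf']
      exact_mod_cast (show b' + 1 < _ + 1 by omega)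
    · omega
  | one hnf =>
    obtain ⟨rfl, hlex⟩ | ⟨rfl, rfl, ha'⟩ := hnf.pred_cases hk hnf'
    · rw [h'.eq_of_isNF_one hk1 hnf', mul_add, mul_add, add_assoc, add_assoc]
      exact add_lt_add_right (omega0_mul_add_lt_of_lex hlex) _
    · obtain rfl : a' = 0 := by omega
      rw [h'.eq_of_isNF_zero hk1 hnf']
      simpa using (natCast_lt_omega0 (b' + 1))
  | @ge a b l oa ha hnf hxa ih =>
    obtain ⟨rfl, hlex⟩ | ⟨rfl, rfl, rfl⟩ := hnf.pred_cases hk hnf'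
    · obtain ⟨oa', hxa', rfl⟩ := h'.exists_of_isNF hk1 ha hnf'
      rw [hxa.unique hk1 hxa', msub_one, add_assoc, add_assoc]
      exact add_lt_add_right (omega0_mul_add_lt_of_lex hlex) _
    · have hoa : 1 ≤ oa - 1 := one_le_sub_one ((Nat.cast_le.2 ha).trans hxa.natCast_le)
      simp only [Nat.cast_zero, mul_zero, add_zero, msub_one]
      rcases (show a' = 1 ∨ 2 ≤ a' by omega) with rfl | ha'
      · rw [h'.eq_of_isNF_one hk1 hnf']
        refine (omega0_mul_add_lt_omega0_sq ?_ (natCast_lt_omega0 l')).trans_le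
          (le_mul_of_one_le_right' hoa)
        exact_mod_cast natCast_lt_omega0 (1 + b')
      · obtain ⟨oa', hxa', rfl⟩ := h'.exists_of_isNF hk1 ha' hnf'
        obtain ⟨_, _, _, hnf''⟩ := hxa'.exists_isNF (by omega)
        rw [Nat.add_sub_cancel] at ih
        have hoa' : 1 ≤ oa' := (show (1 : Ordinal) ≤ 2 by norm_num).trans
          ((Nat.cast_le.2 ha').trans hxa'.natCast_le)
        rw [add_assoc]
        exact mul_add_lt_mul (omega0_mul_add_lt_omega0_sq (natCast_lt_omega0 b')
          (natCast_lt_omega0 l')) (sub_one_lt_sub_one hoa' (ih hnf'' hxa'))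

theorem lt_of_pred (hk : 2 ≤ k) (h : Xi k m o) (hm : 0 < m) (h' : Xi k (m - 1) o') : o' < o := by
  rcases (m - 1).eq_zero_or_pos with hm1 | hm1
  · rw [hm1] at h'
    rw [h'.eq_zero (by omega)]
    exact (show (0 : Ordinal) < m by exact_mod_cast hm).trans_le h.natCast_le
  · obtain ⟨_, _, _, hnf'⟩ := h'.exists_isNF hm1
    exact h.lt_of_isNF_pred hk hnf' h'

end Xi

open Ordinal in
/-- `ξ_k(m) < ω^ω` for all `m`, and `ξ_k(m-1) < ξ_k(m)` for `m > 0`. -/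
theorem xi_lt_omega_omega_and_strict_mono :
    (∀ k m : ℕ, ∀ o : Ordinal, 3 ≤ k → Xi k m o → o < omega0 ^ omega0) ∧
    (∀ k m : ℕ, ∀ o o' : Ordinal, 3 ≤ k → 0 < m →
      Xi k (m - 1) o' → Xi k m o → o' < o) :=
  ⟨fun _ _ _ _ h => h.lt_omega0_opow_omega0,
    fun _ _ _ _ hk hm h' h => h.lt_of_pred (by omega) hm h'⟩
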